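/- Let F be a weakly viable consular election rule satisfying SPP and SPO. Then F is unanimous: for every profile P and alternative a, if every voter ranks a first in P, then a ∈ F(P). -/

import Mathlib

open Function

/-- A ballot is a strict linear order on the set of alternatives. -/
abbrev Ballot (A : Type*) := LinearOrder A

/-- A profile assigns a ballot to each voter. -/
abbrev Profile (V A : Type*) := V → Ballot A

variable {V A : Type*}

/-- The best (greatest) element of `W` under ballot `L` (junk value if `W` is empty). -/
noncomputable def bestIn [Nonempty A] (L : Ballot A) (W : Finset A) : A :=
  if h : W.Nonempty then @Finset.max' A L W h else Classical.arbitrary A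

/-- The worst (least) element of `W` under ballot `L` (junk value if `W` is empty). -/
noncomputable def worstIn [Nonempty A] (L : Ballot A) (W : Finset A) : A :=
  if h : W.Nonempty then @Finset.min' A L W h else Classical.arbitrary A

/-- Strategy-proofness for optimists. -/
def SPO [DecidableEq V] [Nonempty A] (F : Profile V A → Finset A) : Prop :=
  ∀ (P : Profile V A) (i : V) (Pi' : Ballot A),
    (P i).le (bestIn (P i) (F (Function.update P i Pi'))) (bestIn (P i) (F P))

/-- Strategy-proofness for pessimists. -/
def SPP [DecidableEq V] [Nonempty A] (F : Profile V A → Finset A) : Prop :=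
  ∀ (P : Profile V A) (i : V) (Pi' : Ballot A),
    (P i).le (worstIn (P i) (F (Function.update P i Pi'))) (worstIn (P i) (F P))

/-- `F` is weakly viable if every alternative is on some winning committee. -/
def WeaklyViable (F : Profile V A → Finset A) : Prop :=
  ∀ a : A, ∃ P : Profile V A, a ∈ F P

/-- `F` is Marian if some alternative is on every winning committee. -/
def Marian (F : Profile V A → Finset A) : Prop :=
  ∃ m : A, ∀ P : Profile V A, m ∈ F P

/-- restriction of a ballot to a subset of alternatives -/
def restrictBallot (L : Ballot A) (B : Finset A) : Ballot {x // x ∈ B} :=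
  @LinearOrder.lift' _ A L (fun x => (x : A)) Subtype.val_injective

/-- A consular rule is reducible if it is the disjoint union of two social choice functions. -/
def Reducible [Fintype A] [DecidableEq A] (F : Profile V A → Finset A) : Prop :=
  ∃ B C : Finset A, B.Nonempty ∧ C.Nonempty ∧ Disjoint B C ∧ B ∪ C = Finset.univ ∧
    ∃ (G : Profile V {x // x ∈ B} → {x // x ∈ B}) (H : Profile V {x // x ∈ C} → {x // x ∈ C}),
      ∀ P : Profile V A,
        F P = {((G (fun i => restrictBallot (P i) B)) : A), ((H (fun i => restrictBallot (P i) C)) : A)}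

/-- The range graph of a consular election rule. -/
def rangeGraph [DecidableEq A] (F : Profile V A → Finset A) : SimpleGraph A where
  Adj a b := a ≠ b ∧ ∃ P : Profile V A, F P = {a, b}
  symm := by
    constructor
    rintro a b ⟨hab, P, hP⟩
    exact ⟨hab.symm, P, by rwa [Finset.pair_comm]⟩
  loopless := by constructor; rintro a ⟨h, -⟩; exact h rfl

/-- `t` is ranked immediately above `s` in ballot `L`. -/
def JustAbove (L : Ballot A) (s t : A) : Prop :=
  L.lt s t ∧ ∀ z, ¬ (L.lt s z ∧ L.lt z t)

/-- The ballot obtained from `L` by transposing the alternatives `s` and `t`. -/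
def swapBallot [DecidableEq A] (L : Ballot A) (s t : A) : Ballot A :=
  @LinearOrder.lift' A A L (Equiv.swap s t) (Equiv.injective _)

/-- `L'` is obtained from `L` by moving `s` up. -/
def MovedUp (L L' : Ballot A) (s : A) : Prop :=
  (∀ x y, x ≠ s → y ≠ s → (L'.lt x y ↔ L.lt x y)) ∧ ∀ x, L.lt x s → L'.lt x s

/-- `L'` is obtained from `L` by moving `s` down. -/
def MovedDown (L L' : Ballot A) (s : A) : Prop :=
  (∀ x y, x ≠ s → y ≠ s → (L'.lt x y ↔ L.lt x y)) ∧ ∀ x, L.lt s x → L'.lt s x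

/-- Strategy-proofness of a single-winner social choice function. -/
def SCFStrategyProof {B : Type*} [DecidableEq V] (G : Profile V B → B) : Prop :=
  ∀ (Q : Profile V B) (i : V) (Qi' : Ballot B),
    (Q i).le (G (Function.update Q i Qi')) (G Q)

/-- Edge-connectivity of a graph. -/
def EdgeConnectivity {X : Type*} (G : SimpleGraph X) : Prop :=
  ∀ a b c d : X, G.Adj a b → G.Adj c d → a ≠ c → a ≠ d → b ≠ c → b ≠ d →
    (G.Adj a c ∨ G.Adj a d) ∧ (G.Adj b c ∨ G.Adj b d)



lemma bestIn_eq_top {A : Type*} [Nonempty A] (L : Ballot A) (W : Finset A) (a : A)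
    (haW : a ∈ W) (htop : ∀ x, L.le x a) : bestIn L W = a := by
  letI := L
  unfold bestIn
  rw [dif_pos ⟨a, haW⟩]
  exact le_antisymm (Finset.max'_le _ _ _ fun x _ => htop x) (Finset.le_max' _ _ haW)

lemma bestIn_mem {A : Type*} [Nonempty A] (L : Ballot A) (W : Finset A)
    (hW : W.Nonempty) : bestIn L W ∈ W := by
  letI := L
  unfold bestIn
  rw [dif_pos hW]
  exact Finset.max'_mem _ _

/-- a weakly viable consular election rule satisfying SPP and SPO is
unanimous. -/
theorem statement_5 {V A : Type*} [Fintype V] [Nonempty V] [DecidableEq V] [Fintype A] [DecidableEq A] [Nonempty A]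
    (F : Profile V A → Finset A) (hcomm : ∀ P, (F P).card = 2)
    (hviable : WeaklyViable F) (hSPP : SPP F) (hSPO : SPO F) :
    ∀ (P : Profile V A) (a : A), (∀ i : V, ∀ x : A, (P i).le x a) → a ∈ F P := by
  intro P a ha
  obtain ⟨Q, hQ⟩ := hviable a
  have hne : ∀ R : Profile V A, (F R).Nonempty := fun R =>
    Finset.card_pos.mp (by rw [hcomm]; norm_num)
  have key : ∀ S : Finset V, a ∈ F (fun i => if i ∈ S then P i else Q i) := by
    intro S
    induction S using Finset.induction with
    | empty => simpa using hQ
    | @insert j S hj ih =>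
      set R : Profile V A := fun i => if i ∈ insert j S then P i else Q i with hR
      have hRj : R j = P j := by simp [hR]
      have hupd : Function.update R j (Q j) = fun i => if i ∈ S then P i else Q i := by
        funext i
        by_cases h : i = j
        · subst h; simp [Function.update, hj]
        · simp [Function.update, h, hR, Finset.mem_insert]
      have hSPOj := hSPO R j (Q j)
      rw [hupd, hRj] at hSPOj
      rw [bestIn_eq_top (P j) _ a ih (ha j)] at hSPOj
      have hmem := bestIn_mem (P j) (F R) (hne R)
      have heq : bestIn (P j) (F R) = a :=
        @le_antisymm A (@LinearOrder.toPartialOrder A (P j)) _ _ (ha j _) hSPOj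
      rwa [heq] at hmem
  have := key Finset.univ
  simpa using this
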